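/- arXiv:2502.18951 — 4 statements merged into one kernel-verified Lean document; each statement's English description precedes it below -/
import Mathlib

section
/- For every real number y with |y| < 1 and every n ∈ ℕ, the series ∑_{k=0}^∞ k^n · y^k converges and equals (1/(1−y)) · w_n(y/(1−y)), where w_n is the geometric polynomial of degree n. -/
/-!
Newton's forward-difference formula expands `k ^ n = ∑_{j ≤ n} C(k, j) · Δʲ(xⁿ)(0)`, and
`Δʲ(xⁿ)(0)` is precisely the alternating sum `j! S(n, j)` appearing in `geomPoly`. Summing termwise
against `∑_k C(k, j) y^k = y^j / (1 - y)^(j + 1)` gives the closed form.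
-/

/-- The geometric polynomial of degree `n`:
`w_n(y) = ∑_{j=0}^n S(n,j) · j! · y^j`, where `S(n,j)` is the Stirling number of the
second kind, written via its explicit formula
`S(n,j)·j! = ∑_{i=0}^j (−1)^i C(j,i) (j−i)^n` (with the convention `0^0 = 1`). -/
noncomputable def geomPoly (n : ℕ) (y : ℝ) : ℝ :=
  ∑ j ∈ Finset.range (n + 1),
    (∑ i ∈ Finset.range (j + 1), (-1 : ℝ) ^ i * (j.choose i : ℝ) * ((j - i : ℕ) : ℝ) ^ n) * y ^ j

open Finset fwdDiff

section ForwardDifferences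

variable {R : Type*} [CommRing R]

theorem fwdDiff_iter_pow_eq_sum (n j : ℕ) :
    Δ_[1] ^[j] (fun r : R ↦ r ^ n) 0 =
      ∑ i ∈ range (j + 1), (-1 : R) ^ i * j.choose i * ((j - i : ℕ) : R) ^ n := by
  rw [fwdDiff_iter_eq_sum_shift, ← sum_range_reflect]
  refine sum_congr rfl fun i hi ↦ ?_
  have hij : i ≤ j := Nat.lt_succ_iff.mp (mem_range.mp hi)
  rw [Nat.add_sub_cancel, Nat.sub_sub_self hij, Nat.choose_symm hij]
  simp [zsmul_eq_mul]

theorem natCast_pow_eq_sum_choose_mul_fwdDiff_iter (n k : ℕ) :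
    (k : R) ^ n = ∑ j ∈ range (n + 1), k.choose j * Δ_[1] ^[j] (fun r : R ↦ r ^ n) 0 := by
  have hk := shift_eq_sum_fwdDiff_iter (1 : R) (fun r ↦ r ^ n) k 0
  simp only [zero_add, nsmul_eq_mul, mul_one] at hk
  have hle : ∀ {m}, m ≤ n + k → range (m + 1) ⊆ range (n + k + 1) := fun hm ↦
    range_subset_range.mpr (by omega)
  rw [hk, sum_subset (hle (by omega)), sum_subset (s₁ := range (n + 1)) (hle (by omega))]
  · intro j _ hj
    rw [fwdDiff_iter_pow_eq_zero_of_lt (by simpa using hj), Pi.zero_apply, mul_zero]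
  · intro j _ hj
    rw [Nat.choose_eq_zero_of_lt (by simpa using hj), Nat.cast_zero, zero_mul]

end ForwardDifferences

theorem hasSum_choose_mul_geometric {𝕜 : Type*} [NormedField 𝕜] (j : ℕ) {r : 𝕜}
    (hr : ‖r‖ < 1) : HasSum (fun k ↦ (k.choose j : 𝕜) * r ^ k) (r ^ j / (1 - r) ^ (j + 1)) := by
  have hvanish : ∑ i ∈ range j, (i.choose j : 𝕜) * r ^ i = 0 :=
    sum_eq_zero fun i hi ↦ by rw [Nat.choose_eq_zero_of_lt (mem_range.mp hi)]; simp
  have hshift : (fun k ↦ ((k + j).choose j : 𝕜) * r ^ (k + j)) =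
      fun k ↦ r ^ j * (((k + j).choose j : 𝕜) * r ^ k) := by
    ext k; ring
  rw [← hasSum_nat_add_iff' j, hvanish, sub_zero, hshift, div_eq_mul_one_div]
  exact (hasSum_choose_mul_geometric_of_norm_lt_one j hr).mul_left (r ^ j)

theorem geomPoly_eq_sum_fwdDiff_iter (n : ℕ) (y : ℝ) :
    geomPoly n y = ∑ j ∈ range (n + 1), Δ_[1] ^[j] (fun x : ℝ ↦ x ^ n) 0 * y ^ j := by
  simp only [geomPoly, fwdDiff_iter_pow_eq_sum]

theorem hasSum_natCast_pow_mul_geometric {𝕜 : Type*} [NormedField 𝕜] (n : ℕ) {r : 𝕜}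
    (hr : ‖r‖ < 1) :
    HasSum (fun k : ℕ ↦ (k : 𝕜) ^ n * r ^ k)
      ((1 - r)⁻¹ * ∑ j ∈ range (n + 1), Δ_[1] ^[j] (fun x : 𝕜 ↦ x ^ n) 0 * (r / (1 - r)) ^ j) := by
  have hr1 : 1 - r ≠ 0 := sub_ne_zero.mpr fun h ↦ by simp [← h] at hr
  have hexpand : (fun k : ℕ ↦ (k : 𝕜) ^ n * r ^ k) = fun k ↦
      ∑ j ∈ range (n + 1), Δ_[1] ^[j] (fun x : 𝕜 ↦ x ^ n) 0 * ((k.choose j : 𝕜) * r ^ k) := by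
    ext k
    rw [natCast_pow_eq_sum_choose_mul_fwdDiff_iter, sum_mul]
    exact sum_congr rfl fun j _ ↦ by ring
  have hvalue : ∀ j, (1 - r)⁻¹ * (r / (1 - r)) ^ j = r ^ j / (1 - r) ^ (j + 1) := fun j ↦ by
    rw [div_pow, pow_succ]
    field_simp
  rw [hexpand, mul_sum]
  refine hasSum_sum fun j _ ↦ ?_
  rw [mul_left_comm, hvalue]
  exact (hasSum_choose_mul_geometric j hr).mul_left _

/-- For `|y| < 1` and `n ∈ ℕ`, the series `∑_{k=0}^∞ k^n y^k` converges and equals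
`(1/(1−y)) · w_n(y/(1−y))`. -/
theorem geometric_like_series (y : ℝ) (hy : |y| < 1) (n : ℕ) :
    HasSum (fun k : ℕ => (k : ℝ) ^ n * y ^ k)
      ((1 / (1 - y)) * geomPoly n (y / (1 - y))) := by
  rw [one_div, geomPoly_eq_sum_fwdDiff_iter]
  exact hasSum_natCast_pow_mul_geometric n (by rwa [Real.norm_eq_abs])
end

section
/- Let μ > 0, t > 0, let N be an ℕ-valued random variable with the geometric counting distribution at time t with parameter μ, and let (Y_i)_{i≥1} be i.i.d. nonnegative real random variables independent of N. Then for every u ≥ 0, E[exp(−u·∑_{i=1}^{N} Y_i)] = 1/(1 + μt·(1 − E[exp(−u·Y_1)])), where the empty sum (N = 0) is 0. -/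
set_option maxHeartbeats 1000000


open MeasureTheory ProbabilityTheory

/-- Laplace transform of a geometric compound sum: if `N` has the geometric counting
distribution at time `t` with parameter `μ`, and `(Y i)` are i.i.d. nonnegative random
variables independent of `N`, then for every `u ≥ 0`,
`E[exp(−u ∑_{i<N} Y_i)] = 1/(1 + μt(1 − E[exp(−u Y_0)]))`. -/
theorem laplace_geometric_compound {Ω : Type*} [MeasureSpace Ω]
    [IsProbabilityMeasure (ℙ : Measure Ω)]
    (μ t : ℝ) (hμ : 0 < μ) (ht : 0 < t)
    (N : Ω → ℕ) (hN : Measurable N)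
    (Y : ℕ → Ω → ℝ) (hYmeas : ∀ i, Measurable (Y i))
    (hYnonneg : ∀ i ω, 0 ≤ Y i ω)
    (hYindep : iIndepFun Y ℙ)
    (hYident : ∀ i, Measure.map (Y i) ℙ = Measure.map (Y 0) ℙ)
    (hindep : IndepFun N (fun ω => fun i => Y i ω) ℙ)
    (hNdist : ∀ n : ℕ,
      ℙ (N ⁻¹' {n}) = ENNReal.ofReal ((1 / (1 + μ * t)) * (μ * t / (1 + μ * t)) ^ n)) :
    ∀ u : ℝ, 0 ≤ u →
      ∫ ω, Real.exp (-u * ∑ i ∈ Finset.range (N ω), Y i ω) ∂ℙ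
        = 1 / (1 + μ * t * (1 - ∫ ω, Real.exp (-u * Y 0 ω) ∂ℙ)) := by
  intro u hu
  set φ : ℝ := ∫ ω, Real.exp (-u * Y 0 ω) ∂ℙ with hφdef
  have hμt : 0 < μ * t := mul_pos hμ ht
  have h1μt : 0 < 1 + μ * t := by linarith
  -- the value of the Laplace transform of a single Y i
  have hmgf_eq : ∀ i, mgf (Y i) ℙ (-u) = φ := by
    intro i
    have h0 : ∀ j, mgf (Y j) ℙ (-u)
        = ∫ x, Real.exp (-u * x) ∂(Measure.map (Y j) ℙ) := by
      intro j
      rw [mgf, integral_map (hYmeas j).aemeasurable]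
      exact (Real.continuous_exp.comp (continuous_const.mul continuous_id)).aestronglyMeasurable
    rw [h0 i, hYident i, ← h0 0]
    rfl
  -- φ ∈ [0, 1]
  have hexple : ∀ (i : ℕ) ω, Real.exp (-u * Y i ω) ≤ 1 := by
    intro i ω
    rw [← Real.exp_zero]
    apply Real.exp_le_exp.2
    have := mul_nonneg hu (hYnonneg i ω)
    linarith
  have hφ0 : 0 ≤ φ := integral_nonneg fun ω => (Real.exp_pos _).le
  have hφ1 : φ ≤ 1 := by
    calc φ ≤ ∫ _ω, (1 : ℝ) ∂(ℙ : Measure Ω) := by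
            apply integral_mono_of_nonneg (ae_of_all _ fun ω => (Real.exp_pos _).le)
              (integrable_const 1) (ae_of_all _ fun ω => hexple 0 ω)
      _ = 1 := by simp
  -- ∫ exp(-u * ∑_{i<n} Y i) = φ ^ n
  have hsum_int : ∀ n : ℕ,
      ∫ ω, Real.exp (-u * ∑ i ∈ Finset.range n, Y i ω) ∂ℙ = φ ^ n := by
    intro n
    have := hYindep.mgf_sum (t := -u) hYmeas (Finset.range n)
    have heq : mgf (∑ i ∈ Finset.range n, Y i) ℙ (-u)
        = ∫ ω, Real.exp (-u * ∑ i ∈ Finset.range n, Y i ω) ∂ℙ := by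
      rw [mgf]
      congr 1 with ω
      simp [Finset.sum_apply]
    rw [← heq, this]
    simp_rw [hmgf_eq]
    simp
  -- measurability of the compound function
  set f : Ω → ℝ := fun ω => Real.exp (-u * ∑ i ∈ Finset.range (N ω), Y i ω) with hfdef
  have hgnm : ∀ n : ℕ, Measurable fun ω => Real.exp (-u * ∑ i ∈ Finset.range n, Y i ω) :=
    fun n => Real.continuous_exp.measurable.comp
      (measurable_const.mul (Finset.measurable_sum (Finset.range n) fun i _ => hYmeas i))
  have hfmeas : Measurable f := by
    intro s hs
    have hdec : f ⁻¹' s = ⋃ n, (N ⁻¹' {n}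
        ∩ (fun ω => Real.exp (-u * ∑ i ∈ Finset.range n, Y i ω)) ⁻¹' s) := by
      ext ω
      simp only [Set.mem_preimage, Set.mem_iUnion, Set.mem_inter_iff, Set.mem_singleton_iff]
      constructor
      · intro h
        exact ⟨N ω, rfl, h⟩
      · rintro ⟨n, hn, h⟩
        simpa [hfdef, hn] using h
    rw [hdec]
    exact MeasurableSet.iUnion fun n =>
      (hN (measurableSet_singleton n)).inter (hgnm n hs)
  have hfint : Integrable f ℙ := by
    apply Integrable.mono' (integrable_const (1 : ℝ)) hfmeas.aestronglyMeasurable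
    filter_upwards with ω
    rw [Real.norm_eq_abs, abs_of_pos (Real.exp_pos _), ← Real.exp_zero]
    apply Real.exp_le_exp.2
    have : 0 ≤ ∑ i ∈ Finset.range (N ω), Y i ω :=
      Finset.sum_nonneg fun i _ => hYnonneg i ω
    nlinarith
  -- decompose the integral over the level sets of N
  set A : ℕ → Set Ω := fun n => N ⁻¹' {n} with hAdef
  have hAmeas : ∀ n, MeasurableSet (A n) := fun n => hN (measurableSet_singleton n)
  have hAdisj : Pairwise (Function.onFun Disjoint A) := fun m n hmn =>
    Set.disjoint_left.2 fun ω hm hn => hmn (by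
      simp only [hAdef, Set.mem_preimage, Set.mem_singleton_iff] at hm hn
      rw [← hm, ← hn])
  have hAunion : (⋃ n, A n) = Set.univ := by
    ext ω; simp [hAdef]
  have hdecomp : ∫ ω, f ω ∂ℙ = ∑' n, ∫ ω in A n, f ω ∂ℙ := by
    rw [← setIntegral_univ (μ := (ℙ : Measure Ω)) (f := f), ← hAunion,
      integral_iUnion hAmeas hAdisj (by rw [hAunion]; exact hfint.integrableOn)]
  -- each term factorizes by independence
  have hterm : ∀ n : ℕ,
      ∫ ω in A n, f ω ∂ℙ = (ℙ (A n)).toReal * φ ^ n := by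
    intro n
    have hcongr : ∫ ω in A n, f ω ∂ℙ
        = ∫ ω in A n, Real.exp (-u * ∑ i ∈ Finset.range n, Y i ω) ∂ℙ := by
      apply setIntegral_congr_fun (hAmeas n)
      intro ω hω
      have : N ω = n := hω
      simp [hfdef, this]
    rw [hcongr]
    -- indicator trick
    set X : Ω → ℝ := fun ω => if N ω = n then (1 : ℝ) else 0 with hXdef
    set g : Ω → ℝ := fun ω => Real.exp (-u * ∑ i ∈ Finset.range n, Y i ω) with hgdef
    have hXcomp : X = (fun m : ℕ => if m = n then (1 : ℝ) else 0) ∘ N := rfl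
    have hgcomp : g = (fun y : ℕ → ℝ => Real.exp (-u * ∑ i ∈ Finset.range n, y i))
        ∘ (fun ω => fun i => Y i ω) := rfl
    have hgm : Measurable g := by
      rw [hgcomp]
      exact (Real.continuous_exp.measurable.comp
        (measurable_const.mul (Finset.measurable_sum _ fun i _ => measurable_pi_apply i))).comp
        (measurable_pi_lambda _ hYmeas)
    have hXm : Measurable X := by
      rw [hXcomp]
      exact (measurable_of_countable _).comp hN
    have hXg : IndepFun X g ℙ := by
      rw [hXcomp, hgcomp]
      exact hindep.comp (measurable_of_countable _)
        (Real.continuous_exp.measurable.comp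
          (measurable_const.mul (Finset.measurable_sum _ fun i _ => measurable_pi_apply i)))
    have hset : ∫ ω in A n, g ω ∂ℙ = ∫ ω, X ω * g ω ∂ℙ := by
      rw [← integral_indicator (hAmeas n)]
      congr 1 with ω
      by_cases h : N ω = n <;>
        simp [Set.indicator, hAdef, hXdef, h]
    rw [hset, hXg.integral_fun_mul_eq_mul_integral hXm.aestronglyMeasurable hgm.aestronglyMeasurable,
      ← hsum_int n]
    congr 1
    have : ∫ ω, X ω ∂ℙ = ∫ ω, Set.indicator (A n) (fun _ => (1 : ℝ)) ω ∂ℙ := by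
      congr 1 with ω
      by_cases h : N ω = n <;> simp [Set.indicator, hAdef, hXdef, h]
    rw [this, integral_indicator_const _ (hAmeas n)]
    simp [measureReal_def]
  -- compute the geometric series
  have hPn : ∀ n : ℕ, (ℙ (A n)).toReal
      = (1 / (1 + μ * t)) * (μ * t / (1 + μ * t)) ^ n := by
    intro n
    rw [hAdef, hNdist n, ENNReal.toReal_ofReal]
    positivity
  have hr0 : 0 ≤ μ * t / (1 + μ * t) * φ := by positivity
  have hr1 : μ * t / (1 + μ * t) * φ < 1 := by
    calc μ * t / (1 + μ * t) * φ ≤ μ * t / (1 + μ * t) * 1 := by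
          apply mul_le_mul_of_nonneg_left hφ1 (by positivity)
      _ < 1 := by rw [mul_one, div_lt_one h1μt]; linarith
  have hfinal : ∑' n, (ℙ (A n)).toReal * φ ^ n
      = 1 / (1 + μ * t * (1 - φ)) := by
    have heach : ∀ n : ℕ, (ℙ (A n)).toReal * φ ^ n
        = (1 / (1 + μ * t)) * (μ * t / (1 + μ * t) * φ) ^ n := by
      intro n
      rw [hPn n, mul_pow, mul_assoc]
    simp_rw [heach]
    rw [tsum_mul_left, tsum_geometric_of_lt_one hr0 hr1]
    have hden : 0 < 1 + μ * t * (1 - φ) := by nlinarith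
    have h2 : 1 - μ * t / (1 + μ * t) * φ = (1 + μ * t * (1 - φ)) / (1 + μ * t) := by
      field_simp
      ring
    rw [h2]
    field_simp
  calc ∫ ω, f ω ∂ℙ = ∑' n, ∫ ω in A n, f ω ∂ℙ := hdecomp
    _ = ∑' n, (ℙ (A n)).toReal * φ ^ n := by simp_rw [hterm]
    _ = 1 / (1 + μ * t * (1 - φ)) := hfinal
end

section
/- Let (Y_i)_{i≥1} be i.i.d. square-integrable real random variables, and let N_s, N_t be ℕ-valued square-integrable random variables with N_s ≤ N_t almost surely, such that the pair (N_s, N_t) is independent of the sequence (Y_i). Then Cov[∑_{i=1}^{N_t} Y_i, ∑_{i=1}^{N_s} Y_i] = Var[Y_1]·E[N_s] + (E[Y_1])^2 · Cov[N_t, N_s], where empty sums are 0. -/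
open MeasureTheory ProbabilityTheory
open scoped ENNReal

/-- The covariance of two real random variables: `Cov[X,Y] = E[XY] − E[X]E[Y]`. -/
noncomputable def cov {Ω : Type*} [MeasureSpace Ω] (X Y : Ω → ℝ) : ℝ :=
  (∫ ω, X ω * Y ω ∂ℙ) - (∫ ω, X ω ∂ℙ) * (∫ ω, Y ω ∂ℙ)

section Aux

lemma indepFun_sum_sum {Ω : Type*} [MeasureSpace Ω] {Y : ℕ → Ω → ℝ}
    (hYmeas : ∀ i, Measurable (Y i))
    (hYindep : iIndepFun Y ℙ)
    {S T : Finset ℕ} (hST : Disjoint S T) :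
    IndepFun (fun ω => ∑ i ∈ S, Y i ω) (fun ω => ∑ i ∈ T, Y i ω) ℙ := by
  have h := hYindep.indepFun_finset S T hST hYmeas
  have gmeas : ∀ (U : Finset ℕ), Measurable (fun v : U → ℝ => ∑ i : U, v i) := fun U =>
    Finset.measurable_sum _ (fun i _ => measurable_pi_apply i)
  have h2 := h.comp (gmeas S) (gmeas T)
  have e : ∀ (U : Finset ℕ),
      ((fun v : U → ℝ => ∑ i : U, v i) ∘ (fun a (i : U) => Y i a))
        = fun ω => ∑ i ∈ U, Y i ω := fun U => by
    funext ω
    simp only [Function.comp_apply]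
    exact Finset.sum_coe_sort U (fun i => Y i ω)
  rw [e S, e T] at h2
  exact h2

/-- Key reduction: the expectation of a function of `(P, Yv)` with `P` independent of `Yv`
equals the expectation of the "conditional expectation" `G ∘ P`, provided
`G p = E[F (p, Yv)]` for all `p` in a set of full `P`-measure. -/
lemma integral_comp_eq {Ω : Type*} [MeasureSpace Ω] [IsProbabilityMeasure (ℙ : Measure Ω)]
    (P : Ω → ℕ × ℕ) (hP : Measurable P) (Yv : Ω → ℕ → ℝ) (hYv : Measurable Yv)
    (hindep : IndepFun P Yv ℙ)
    (F : (ℕ × ℕ) × (ℕ → ℝ) → ℝ) (hF : Measurable F)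
    (g : ℕ × ℕ → ℝ)
    (hbound : ∀ p, ∫⁻ ω, ‖F (p, Yv ω)‖₊ ∂ℙ ≤ ENNReal.ofReal (g p))
    (hg : Integrable (fun ω => g (P ω)) ℙ)
    (Q : ℕ × ℕ → Prop) (hae : ∀ᵐ ω ∂ℙ, Q (P ω))
    (G : ℕ × ℕ → ℝ) (hG : ∀ p, Q p → ∫ ω, F (p, Yv ω) ∂ℙ = G p) :
    ∫ ω, F (P ω, Yv ω) ∂ℙ = ∫ ω, G (P ω) ∂ℙ := by
  set ν := Measure.map P ℙ with hν
  set κ := Measure.map Yv ℙ with hκ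
  haveI : IsProbabilityMeasure ν := Measure.isProbabilityMeasure_map hP.aemeasurable
  haveI : IsProbabilityMeasure κ := Measure.isProbabilityMeasure_map hYv.aemeasurable
  have hprod : Measure.map (fun ω => (P ω, Yv ω)) ℙ = ν.prod κ :=
    (indepFun_iff_map_prod_eq_prod_map_map hP.aemeasurable hYv.aemeasurable).mp hindep
  have hinner_lint : ∀ p, ∫⁻ w, ‖F (p, w)‖₊ ∂κ = ∫⁻ ω, ‖F (p, Yv ω)‖₊ ∂ℙ := fun p => by
    rw [hκ]
    exact lintegral_map ((hF.comp measurable_prodMk_left).nnnorm.coe_nnreal_ennreal) hYv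
  have hFint : Integrable F (ν.prod κ) := by
    refine ⟨hF.aestronglyMeasurable, ?_⟩
    rw [HasFiniteIntegral, lintegral_prod _ hF.enorm.aemeasurable]
    calc ∫⁻ p, ∫⁻ w, ‖F (p, w)‖₊ ∂κ ∂ν ≤ ∫⁻ p, ENNReal.ofReal (g p) ∂ν := by
          refine lintegral_mono fun p => ?_
          rw [hinner_lint p]; exact hbound p
      _ = ∫⁻ ω, ENNReal.ofReal (g (P ω)) ∂ℙ := by
          rw [hν, lintegral_map (by fun_prop) hP]
      _ ≤ ∫⁻ ω, ‖g (P ω)‖₊ ∂ℙ := lintegral_mono fun ω => Real.ofReal_le_enorm _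
      _ < ⊤ := hg.2
  have step1 : ∫ ω, F (P ω, Yv ω) ∂ℙ = ∫ q, F q ∂(ν.prod κ) := by
    rw [← hprod, integral_map (hP.aemeasurable.prodMk hYv.aemeasurable)
      hF.aestronglyMeasurable]
  have step3 : ∫ q, F q ∂(ν.prod κ) = ∫ p, ∫ w, F (p, w) ∂κ ∂ν := integral_prod F hFint
  have step4 : ∀ p, ∫ w, F (p, w) ∂κ = ∫ ω, F (p, Yv ω) ∂ℙ := fun p => by
    rw [hκ]
    exact integral_map hYv.aemeasurable (hF.comp measurable_prodMk_left).aestronglyMeasurable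
  have hQν : ∀ᵐ p ∂ν, Q p := by
    rw [hν, ae_map_iff hP.aemeasurable ((Set.to_countable _).measurableSet)]
    exact hae
  have step5 : ∫ p, ∫ w, F (p, w) ∂κ ∂ν = ∫ p, G p ∂ν := by
    refine integral_congr_ae ?_
    filter_upwards [hQν] with p hp
    rw [step4 p, hG p hp]
  have step6 : ∫ p, G p ∂ν = ∫ ω, G (P ω) ∂ℙ := by
    rw [hν, integral_map hP.aemeasurable (measurable_of_countable G).aestronglyMeasurable]
  rw [step1, step3, step5, step6]

variable {Ω : Type*} [MeasureSpace Ω] [IsProbabilityMeasure (ℙ : Measure Ω)]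
  {Y : ℕ → Ω → ℝ} (hYmeas : ∀ i, Measurable (Y i))
  (hYsq : ∀ i, MemLp (Y i) 2 ℙ)
  (hYindep : iIndepFun Y ℙ)
  (hYident : ∀ i, Measure.map (Y i) ℙ = Measure.map (Y 0) ℙ)

include hYmeas hYident in
lemma int_comp_Y (i : ℕ) (f : ℝ → ℝ) (hf : Measurable f) :
    ∫ ω, f (Y i ω) ∂ℙ = ∫ ω, f (Y 0 ω) ∂ℙ := by
  rw [← integral_map (hYmeas i).aemeasurable hf.aestronglyMeasurable, hYident i,
    integral_map (hYmeas 0).aemeasurable hf.aestronglyMeasurable]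

include hYmeas hYident in
lemma int_Y (i : ℕ) : ∫ ω, Y i ω ∂ℙ = ∫ ω, Y 0 ω ∂ℙ :=
  int_comp_Y hYmeas hYident i (fun x => x) measurable_id

include hYmeas hYident in
lemma sq_Y (i : ℕ) : ∫ ω, (Y i ω) ^ 2 ∂ℙ = ∫ ω, (Y 0 ω) ^ 2 ∂ℙ :=
  int_comp_Y hYmeas hYident i (fun x => x ^ 2) (measurable_id.pow_const 2)

include hYmeas hYident in
lemma abs_Y (i : ℕ) : ∫ ω, |Y i ω| ∂ℙ = ∫ ω, |Y 0 ω| ∂ℙ :=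
  int_comp_Y hYmeas hYident i (fun x => |x|) measurable_abs

include hYmeas hYsq hYident in
lemma var_Y (i : ℕ) : variance (Y i) ℙ = variance (Y 0) ℙ := by
  rw [variance_eq_sub (hYsq i), variance_eq_sub (hYsq 0)]
  simp only [Pi.pow_apply]
  rw [sq_Y hYmeas hYident i, int_Y hYmeas hYident i]

include hYmeas hYsq hYident in
lemma ES (n : ℕ) : ∫ ω, ∑ i ∈ Finset.range n, Y i ω ∂ℙ = n * ∫ ω, Y 0 ω ∂ℙ := by
  rw [integral_finset_sum _ (fun i _ => (hYsq i).integrable one_le_two)]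
  rw [Finset.sum_congr rfl fun i _ => int_Y hYmeas hYident i]
  simp [mul_comm]

include hYmeas hYsq hYindep hYident in
lemma varS (n : ℕ) : variance (fun ω => ∑ i ∈ Finset.range n, Y i ω) ℙ
    = n * variance (Y 0) ℙ := by
  have : (fun ω => ∑ i ∈ Finset.range n, Y i ω) = ∑ i ∈ Finset.range n, Y i := by
    funext ω; simp
  rw [this, IndepFun.variance_sum (fun i _ => hYsq i)
    (fun i _ j _ hij => hYindep.indepFun hij)]
  rw [Finset.sum_congr rfl fun i _ => var_Y hYmeas hYsq hYident i]
  simp [mul_comm]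

include hYmeas hYsq hYindep hYident in
lemma ES2 (n : ℕ) : ∫ ω, (∑ i ∈ Finset.range n, Y i ω) ^ 2 ∂ℙ
    = n * variance (Y 0) ℙ + (n * ∫ ω, Y 0 ω ∂ℙ) ^ 2 := by
  have hmem : MemLp (fun ω => ∑ i ∈ Finset.range n, Y i ω) 2 ℙ :=
    memLp_finset_sum _ (fun i _ => hYsq i)
  have h := variance_eq_sub hmem
  simp only [Pi.pow_apply] at h
  rw [varS hYmeas hYsq hYindep hYident, ES hYmeas hYsq hYident] at h
  linarith [h]

include hYmeas hYsq hYindep hYident in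
lemma Emul {m n : ℕ} (hmn : m ≤ n) :
    ∫ ω, (∑ i ∈ Finset.range n, Y i ω) * (∑ i ∈ Finset.range m, Y i ω) ∂ℙ
      = m * variance (Y 0) ℙ + n * m * (∫ ω, Y 0 ω ∂ℙ) ^ 2 := by
  set μY := ∫ ω, Y 0 ω ∂ℙ with hμY
  set v := variance (Y 0) ℙ with hv
  have hsplit : ∀ ω, ∑ i ∈ Finset.range n, Y i ω
      = (∑ i ∈ Finset.range m, Y i ω) + ∑ i ∈ Finset.Ico m n, Y i ω := fun ω => by
    rw [Finset.range_eq_Ico,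
      ← Finset.sum_Ico_consecutive _ (Nat.zero_le m) hmn, ← Finset.range_eq_Ico]
  have hSint : ∀ s : Finset ℕ, Integrable (fun ω => ∑ i ∈ s, Y i ω) ℙ := fun s =>
    integrable_finset_sum _ (fun i _ => (hYsq i).integrable one_le_two)
  have hSsqint : Integrable (fun ω => (∑ i ∈ Finset.range m, Y i ω) ^ 2) ℙ :=
    (memLp_finset_sum _ (fun i _ => hYsq i)).integrable_sq
  have hind : IndepFun (fun ω => ∑ i ∈ Finset.Ico m n, Y i ω)
      (fun ω => ∑ i ∈ Finset.range m, Y i ω) ℙ := by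
    apply indepFun_sum_sum hYmeas hYindep
    rw [Finset.range_eq_Ico]
    exact (Finset.Ico_disjoint_Ico_consecutive 0 m n).symm
  have hTm : Integrable
      (fun ω => (∑ i ∈ Finset.Ico m n, Y i ω) * (∑ i ∈ Finset.range m, Y i ω)) ℙ :=
    hind.integrable_mul (hSint _) (hSint _)
  have hITm : ∫ ω, (∑ i ∈ Finset.Ico m n, Y i ω) * (∑ i ∈ Finset.range m, Y i ω) ∂ℙ
      = ((n : ℝ) - m) * μY * (m * μY) := by
    have h0 : (fun ω => (∑ i ∈ Finset.Ico m n, Y i ω) * (∑ i ∈ Finset.range m, Y i ω))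
        = (fun ω => ∑ i ∈ Finset.Ico m n, Y i ω) * (fun ω => ∑ i ∈ Finset.range m, Y i ω) := rfl
    rw [h0, hind.integral_mul_eq_mul_integral (hSint _).aestronglyMeasurable (hSint _).aestronglyMeasurable]
    have h1 : ∫ ω, ∑ i ∈ Finset.Ico m n, Y i ω ∂ℙ = ((n : ℝ) - m) * μY := by
      rw [integral_finset_sum _ (fun i _ => (hYsq i).integrable one_le_two),
        Finset.sum_congr rfl fun i _ => int_Y hYmeas hYident i]
      rw [Finset.sum_const, Nat.card_Ico, nsmul_eq_mul, Nat.cast_sub hmn]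
    rw [h1, ES hYmeas hYsq hYident]
  calc ∫ ω, (∑ i ∈ Finset.range n, Y i ω) * (∑ i ∈ Finset.range m, Y i ω) ∂ℙ
      = ∫ ω, ((∑ i ∈ Finset.range m, Y i ω) ^ 2
          + (∑ i ∈ Finset.Ico m n, Y i ω) * (∑ i ∈ Finset.range m, Y i ω)) ∂ℙ := by
        refine integral_congr_ae (Filter.Eventually.of_forall fun ω => ?_)
        show (∑ i ∈ Finset.range n, Y i ω) * (∑ i ∈ Finset.range m, Y i ω)
          = (∑ i ∈ Finset.range m, Y i ω) ^ 2
            + (∑ i ∈ Finset.Ico m n, Y i ω) * (∑ i ∈ Finset.range m, Y i ω)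
        rw [hsplit ω]; ring
    _ = ∫ ω, (∑ i ∈ Finset.range m, Y i ω) ^ 2 ∂ℙ
          + ∫ ω, (∑ i ∈ Finset.Ico m n, Y i ω) * (∑ i ∈ Finset.range m, Y i ω) ∂ℙ :=
        integral_add hSsqint hTm
    _ = (m * v + (m * μY) ^ 2) + ((n : ℝ) - m) * μY * (m * μY) := by
        rw [ES2 hYmeas hYsq hYindep hYident, hITm]
    _ = m * v + n * m * μY ^ 2 := by ring

include hYmeas hYsq hYindep hYident in
lemma lint_mul_bound (m n : ℕ) :
    ∫⁻ ω, ‖(∑ i ∈ Finset.range n, Y i ω) * (∑ i ∈ Finset.range m, Y i ω)‖₊ ∂ℙ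
      ≤ ENNReal.ofReal ((((n : ℝ)) ^ 2 + ((m : ℝ)) ^ 2) * ∫ ω, (Y 0 ω) ^ 2 ∂ℙ) := by
  set μY := ∫ ω, Y 0 ω ∂ℙ with hμY
  set v := variance (Y 0) ℙ with hv
  set B := ∫ ω, (Y 0 ω) ^ 2 ∂ℙ with hBdef
  have hB : B = v + μY ^ 2 := by
    have h := variance_eq_sub (hYsq 0)
    simp only [Pi.pow_apply] at h
    rw [← hμY, ← hBdef] at h
    linarith
  have hvnn : 0 ≤ v := variance_nonneg _ _
  have hμnn : 0 ≤ μY ^ 2 := sq_nonneg _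
  have hsqint : ∀ k : ℕ, Integrable (fun ω => (∑ i ∈ Finset.range k, Y i ω) ^ 2) ℙ :=
    fun k => (memLp_finset_sum _ (fun i _ => hYsq i)).integrable_sq
  have hle : ∀ k : ℕ, (k : ℝ) ≤ (k : ℝ) ^ 2 := fun k => by
    rcases Nat.eq_zero_or_pos k with h | h
    · simp [h]
    · have : (1 : ℝ) ≤ (k : ℝ) := by exact_mod_cast h
      nlinarith
  calc ∫⁻ ω, ‖(∑ i ∈ Finset.range n, Y i ω) * (∑ i ∈ Finset.range m, Y i ω)‖₊ ∂ℙ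
      ≤ ∫⁻ ω, ENNReal.ofReal (((∑ i ∈ Finset.range n, Y i ω) ^ 2
          + (∑ i ∈ Finset.range m, Y i ω) ^ 2) / 2) ∂ℙ := by
        refine lintegral_mono fun ω => ?_
        rw [← enorm_eq_nnnorm, ← ofReal_norm_eq_enorm, Real.norm_eq_abs]
        refine ENNReal.ofReal_le_ofReal ?_
        set a := ∑ i ∈ Finset.range n, Y i ω
        set b := ∑ i ∈ Finset.range m, Y i ω
        nlinarith [sq_nonneg (a - b), sq_nonneg (a + b), abs_mul_abs_self a,
          abs_mul_abs_self b, abs_mul a b, abs_nonneg (a * b), neg_abs_le (a * b)]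
    _ = ENNReal.ofReal (∫ ω, ((∑ i ∈ Finset.range n, Y i ω) ^ 2
          + (∑ i ∈ Finset.range m, Y i ω) ^ 2) / 2 ∂ℙ) := by
        refine (ofReal_integral_eq_lintegral_ofReal ?_ ?_).symm
        · exact ((hsqint n).add (hsqint m)).div_const 2
        · refine Filter.Eventually.of_forall fun ω => ?_
          positivity
    _ ≤ ENNReal.ofReal ((((n : ℝ)) ^ 2 + ((m : ℝ)) ^ 2) * B) := by
        refine ENNReal.ofReal_le_ofReal ?_
        rw [integral_div, integral_add (hsqint n) (hsqint m),
          ES2 hYmeas hYsq hYindep hYident n, ES2 hYmeas hYsq hYindep hYident m, hB]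
        have h1 := hle n
        have h2 := hle m
        nlinarith [sq_nonneg ((n : ℝ)), sq_nonneg ((m : ℝ))]

include hYmeas hYsq hYident in
lemma lint_sum_bound (n : ℕ) :
    ∫⁻ ω, ‖∑ i ∈ Finset.range n, Y i ω‖₊ ∂ℙ
      ≤ ENNReal.ofReal ((n : ℝ) * ∫ ω, |Y 0 ω| ∂ℙ) := by
  have hSint : Integrable (fun ω => ∑ i ∈ Finset.range n, Y i ω) ℙ :=
    integrable_finset_sum _ (fun i _ => (hYsq i).integrable one_le_two)
  have h1 : ∫⁻ ω, ‖∑ i ∈ Finset.range n, Y i ω‖₊ ∂ℙ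
      = ENNReal.ofReal (∫ ω, ‖∑ i ∈ Finset.range n, Y i ω‖ ∂ℙ) :=
    (ofReal_integral_norm_eq_lintegral_enorm hSint).symm
  rw [h1]
  refine ENNReal.ofReal_le_ofReal ?_
  have h2 : ∫ ω, ‖∑ i ∈ Finset.range n, Y i ω‖ ∂ℙ ≤ ∫ ω, ∑ i ∈ Finset.range n, |Y i ω| ∂ℙ := by
    refine integral_mono hSint.norm (integrable_finset_sum _
      (fun i _ => ((hYsq i).integrable one_le_two).abs)) fun ω => ?_
    rw [Real.norm_eq_abs]
    exact Finset.abs_sum_le_sum_abs _ _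
  refine h2.trans ?_
  rw [integral_finset_sum _ (fun i _ => ((hYsq i).integrable one_le_two).abs)]
  rw [Finset.sum_congr rfl fun i _ => abs_Y hYmeas hYident i]
  simp [mul_comm]

end Aux

/-- Covariance identity for nested random sums (Theorem 3.6 (iii)): if `(Y i)` are i.i.d.
square-integrable, `Ns ≤ Nt` a.s. are ℕ-valued square-integrable random variables with the
pair `(Ns, Nt)` independent of the sequence `(Y i)`, then
`Cov[∑_{i<Nt} Y_i, ∑_{i<Ns} Y_i] = Var[Y_0]·E[Ns] + (E[Y_0])²·Cov[Nt, Ns]`. -/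
theorem cov_nested_random_sums {Ω : Type*} [MeasureSpace Ω]
    [IsProbabilityMeasure (ℙ : Measure Ω)]
    (Y : ℕ → Ω → ℝ) (hYmeas : ∀ i, Measurable (Y i))
    (hYsq : ∀ i, MemLp (Y i) 2 ℙ)
    (hYindep : iIndepFun Y ℙ)
    (hYident : ∀ i, Measure.map (Y i) ℙ = Measure.map (Y 0) ℙ)
    (Ns Nt : Ω → ℕ) (hNs : Measurable Ns) (hNt : Measurable Nt)
    (hNs_sq : MemLp (fun ω => (Ns ω : ℝ)) 2 ℙ)
    (hNt_sq : MemLp (fun ω => (Nt ω : ℝ)) 2 ℙ)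
    (hle : ∀ᵐ ω ∂ℙ, Ns ω ≤ Nt ω)
    (hindep : IndepFun (fun ω => (Ns ω, Nt ω)) (fun ω => fun i => Y i ω) ℙ) :
    cov (fun ω => ∑ i ∈ Finset.range (Nt ω), Y i ω)
        (fun ω => ∑ i ∈ Finset.range (Ns ω), Y i ω)
      = variance (Y 0) ℙ * (∫ ω, (Ns ω : ℝ) ∂ℙ)
        + (∫ ω, Y 0 ω ∂ℙ) ^ 2 * cov (fun ω => (Nt ω : ℝ)) (fun ω => (Ns ω : ℝ)) := by
  set μY := ∫ ω, Y 0 ω ∂ℙ with hμY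
  set v := variance (Y 0) ℙ with hv
  set B := ∫ ω, (Y 0 ω) ^ 2 ∂ℙ with hB
  set A := ∫ ω, |Y 0 ω| ∂ℙ with hA
  set P : Ω → ℕ × ℕ := fun ω => (Ns ω, Nt ω) with hPdef
  set Yv : Ω → ℕ → ℝ := fun ω i => Y i ω with hYvdef
  have hP : Measurable P := hNs.prodMk hNt
  have hYv : Measurable Yv := measurable_pi_lambda _ hYmeas
  -- integrability of the dominating functions
  have hNs_int : Integrable (fun ω => (Ns ω : ℝ)) ℙ := hNs_sq.integrable one_le_two
  have hNt_int : Integrable (fun ω => (Nt ω : ℝ)) ℙ := hNt_sq.integrable one_le_two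
  have hNtNs_int : Integrable (fun ω => (Nt ω : ℝ) * (Ns ω : ℝ)) ℙ := by
    have h12 : (1 : ℝ≥0∞) / 1 = 1 / 2 + 1 / 2 := by
      rw [ENNReal.add_halves]
      simp
    have h := hNs_sq.smul (r := 1) hNt_sq
    rw [memLp_one_iff_integrable] at h
    exact h
  -- second product moment identity
  have key2 : ∫ ω, (∑ i ∈ Finset.range (Nt ω), Y i ω) * (∑ i ∈ Finset.range (Ns ω), Y i ω) ∂ℙ
      = v * (∫ ω, (Ns ω : ℝ) ∂ℙ) + μY ^ 2 * ∫ ω, (Nt ω : ℝ) * (Ns ω : ℝ) ∂ℙ := by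
    set F : (ℕ × ℕ) × (ℕ → ℝ) → ℝ :=
      fun q => (∑ i ∈ Finset.range q.1.2, q.2 i) * (∑ i ∈ Finset.range q.1.1, q.2 i) with hFdef
    have hF : Measurable F := by
      have hF' : Measurable (fun r : (ℕ → ℝ) × (ℕ × ℕ) =>
          (∑ i ∈ Finset.range r.2.2, r.1 i) * (∑ i ∈ Finset.range r.2.1, r.1 i)) := by
        refine measurable_from_prod_countable_left fun p => ?_
        exact (show Measurable fun w : ℕ → ℝ =>
            (∑ i ∈ Finset.range p.2, w i) * ∑ i ∈ Finset.range p.1, w i from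
          (Finset.measurable_sum _ (fun i _ => measurable_pi_apply i)).mul
            (Finset.measurable_sum _ (fun i _ => measurable_pi_apply i)))
      exact hF'.comp measurable_swap
    have h := integral_comp_eq P hP Yv hYv hindep F hF
      (fun p => (((p.2 : ℝ)) ^ 2 + ((p.1 : ℝ)) ^ 2) * B)
      (fun p => lint_mul_bound hYmeas hYsq hYindep hYident p.1 p.2)
      (((hNt_sq.integrable_sq.add hNs_sq.integrable_sq)).mul_const B)
      (fun p => p.1 ≤ p.2) hle
      (fun p => (p.1 : ℝ) * v + (p.2 : ℝ) * (p.1 : ℝ) * μY ^ 2)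
      (fun p hp => Emul hYmeas hYsq hYindep hYident hp)
    have hLHS : ∫ ω, F (P ω, Yv ω) ∂ℙ
        = ∫ ω, (∑ i ∈ Finset.range (Nt ω), Y i ω) * (∑ i ∈ Finset.range (Ns ω), Y i ω) ∂ℙ := rfl
    rw [hLHS] at h
    rw [h, integral_add ((hNs_int.mul_const v)) ((hNtNs_int.mul_const (μY ^ 2)))]
    rw [integral_mul_const, integral_mul_const]
    ring
  -- first moment identities
  have key1t : ∫ ω, (∑ i ∈ Finset.range (Nt ω), Y i ω) ∂ℙ = μY * ∫ ω, (Nt ω : ℝ) ∂ℙ := by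
    set F : (ℕ × ℕ) × (ℕ → ℝ) → ℝ := fun q => ∑ i ∈ Finset.range q.1.2, q.2 i with hFdef
    have hF : Measurable F := by
      have hF' : Measurable (fun r : (ℕ → ℝ) × (ℕ × ℕ) => ∑ i ∈ Finset.range r.2.2, r.1 i) :=
        measurable_from_prod_countable_left fun p =>
          (show Measurable fun w : ℕ → ℝ => ∑ i ∈ Finset.range p.2, w i from
            Finset.measurable_sum _ (fun i _ => measurable_pi_apply i))
      exact hF'.comp measurable_swap
    have h := integral_comp_eq P hP Yv hYv hindep F hF
      (fun p => (p.2 : ℝ) * A)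
      (fun p => lint_sum_bound hYmeas hYsq hYident p.2)
      (hNt_int.mul_const A)
      (fun _ => True) (Filter.Eventually.of_forall fun _ => trivial)
      (fun p => (p.2 : ℝ) * μY)
      (fun p _ => ES hYmeas hYsq hYident p.2)
    have hLHS : ∫ ω, F (P ω, Yv ω) ∂ℙ = ∫ ω, (∑ i ∈ Finset.range (Nt ω), Y i ω) ∂ℙ := rfl
    rw [hLHS] at h
    rw [h, integral_mul_const]
    ring
  have key1s : ∫ ω, (∑ i ∈ Finset.range (Ns ω), Y i ω) ∂ℙ = μY * ∫ ω, (Ns ω : ℝ) ∂ℙ := by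
    set F : (ℕ × ℕ) × (ℕ → ℝ) → ℝ := fun q => ∑ i ∈ Finset.range q.1.1, q.2 i with hFdef
    have hF : Measurable F := by
      have hF' : Measurable (fun r : (ℕ → ℝ) × (ℕ × ℕ) => ∑ i ∈ Finset.range r.2.1, r.1 i) :=
        measurable_from_prod_countable_left fun p =>
          (show Measurable fun w : ℕ → ℝ => ∑ i ∈ Finset.range p.1, w i from
            Finset.measurable_sum _ (fun i _ => measurable_pi_apply i))
      exact hF'.comp measurable_swap
    have h := integral_comp_eq P hP Yv hYv hindep F hF
      (fun p => (p.1 : ℝ) * A)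
      (fun p => lint_sum_bound hYmeas hYsq hYident p.1)
      (hNs_int.mul_const A)
      (fun _ => True) (Filter.Eventually.of_forall fun _ => trivial)
      (fun p => (p.1 : ℝ) * μY)
      (fun p _ => ES hYmeas hYsq hYident p.1)
    have hLHS : ∫ ω, F (P ω, Yv ω) ∂ℙ = ∫ ω, (∑ i ∈ Finset.range (Ns ω), Y i ω) ∂ℙ := rfl
    rw [hLHS] at h
    rw [h, integral_mul_const]
    ring
  simp only [cov]
  rw [key2, key1t, key1s]
  ring
end

section
/- Let λ, μ, t > 0 and k ∈ ℕ, and let f : ℝ → ℝ be real-analytic on an open interval I containing λ with f(x) ≥ 0 for all x ∈ I. Then ∑_{n=0}^∞ (1/(1+μt))·(μt/(1+μt))^n · (d^k/du^k)[exp(−n·f(λu))]|_{u=1} = (d^k/du^k)[ 1/(1 + μt·(1 − exp(−f(λu)))) ]|_{u=1}; in particular, multiplying both sides by (−1)^k/k!, the probability mass function of the geometric subordinated Poisson process at k equals ((−1)^k/k!)·(d^k/du^k)[1/(1+μt(1−e^{−f(λu)}))]|_{u=1}. -/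
open Complex Metric

private lemma iterDeriv_const_mul {𝕜 : Type*} [NontriviallyNormedField 𝕜] (c : 𝕜) (f : 𝕜 → 𝕜) :
    ∀ (k : ℕ) (x : 𝕜), iteratedDeriv k (fun y => c * f y) x = c * iteratedDeriv k f x := by
  intro k
  induction k with
  | zero => simp [iteratedDeriv_zero]
  | succ k ih =>
      intro x
      rw [iteratedDeriv_succ]
      have h : iteratedDeriv k (fun y => c * f y) = fun y => c * iteratedDeriv k f y := funext ih
      rw [h, deriv_const_mul_field, iteratedDeriv_succ]

private lemma hasSum_iteratedDeriv_complex :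
    ∀ (k : ℕ) (U : Set ℂ) (F : ℕ → ℂ → ℂ) (u : ℕ → ℝ), IsOpen U → Summable u →
      (∀ n, DifferentiableOn ℂ (F n) U) → (∀ n, ∀ w ∈ U, ‖F n w‖ ≤ u n) →
      ∀ z ∈ U, HasSum (fun n => iteratedDeriv k (F n) z)
        (iteratedDeriv k (fun w => ∑' n, F n w) z) := by
  intro k
  induction k with
  | zero =>
    intro U F u hU hu hF hle z hz
    simpa [iteratedDeriv_zero] using
      (Summable.of_norm_bounded hu (fun n => hle n z hz)).hasSum
  | succ k ih =>
    intro U F u hU hu hF hle z hz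
    obtain ⟨ε, hε, hball⟩ := Metric.isOpen_iff.mp hU z hz
    set δ := ε / 3 with hδdef
    have hδ : 0 < δ := by positivity
    have hsub : ∀ w ∈ ball z δ, closedBall w δ ⊆ U := by
      intro w hw y hy
      apply hball
      have h1 : dist y z ≤ dist y w + dist w z := dist_triangle y w z
      have h2 : dist y w ≤ δ := hy
      have h3 : dist w z < δ := hw
      have : dist y z < ε := by
        have : dist y z ≤ δ + δ := by linarith
        have hδε : δ + δ < ε := by rw [hδdef]; linarith
        linarith
      exact this
    have hball' : ball z δ ⊆ U := fun w hw =>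
      hsub w hw (mem_closedBall_self hδ.le)
    have hdb : ∀ n, ∀ w ∈ ball z δ, ‖deriv (F n) w‖ ≤ u n / δ := by
      intro n w hw
      rw [← Complex.cderiv_eq_deriv hU (hF n) hδ (hsub w hw)]
      apply Complex.norm_cderiv_le hδ
      intro y hy
      exact hle n y (hsub w hw (sphere_subset_closedBall hy))
    have hdiff : ∀ n, DifferentiableOn ℂ (deriv (F n)) (ball z δ) := fun n =>
      ((((hF n).analyticOnNhd hU).deriv).mono hball').differentiableOn
    have hIH := ih (ball z δ) (fun n => deriv (F n)) (fun n => u n / δ) isOpen_ball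
      (hu.div_const δ) hdiff hdb z (mem_ball_self hδ)
    have heq : iteratedDeriv k (fun w => ∑' n, deriv (F n) w) z
        = iteratedDeriv k (deriv (fun w => ∑' n, F n w)) z := by
      apply Filter.EventuallyEq.iteratedDeriv_eq
      filter_upwards [isOpen_ball.mem_nhds (mem_ball_self hδ)] with w hw
      exact (Complex.hasSum_deriv_of_summable_norm hu hF hU hle (hball' hw)).tsum_eq
    simp only [iteratedDeriv_succ']
    rw [← heq]
    exact hIH
open scoped ENNReal NNReal

private lemma iteratedDeriv_real_of_complex {U : Set ℂ} (hU : IsOpen U) {F : ℂ → ℂ}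
    (hF : DifferentiableOn ℂ F U) {h : ℝ → ℝ}
    (hh : ∀ y : ℝ, (y : ℂ) ∈ U → F y = (h y : ℂ)) :
    ∀ (k : ℕ) (y : ℝ), (y : ℂ) ∈ U → iteratedDeriv k h y = (iteratedDeriv k F y).re := by
  have hFa : AnalyticOnNhd ℂ F U := hF.analyticOnNhd hU
  have hFk : ∀ k, AnalyticOnNhd ℂ (iteratedDeriv k F) U := by
    intro k; induction k with
    | zero => simpa [iteratedDeriv_zero] using hFa
    | succ k ih => rw [iteratedDeriv_succ]; exact ih.deriv
  intro k
  induction k with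
  | zero => intro y hy; simp [iteratedDeriv_zero, hh y hy]
  | succ k ih =>
    intro y hy
    have hV : IsOpen (((↑) : ℝ → ℂ) ⁻¹' U) := hU.preimage Complex.continuous_ofReal
    have hev : iteratedDeriv k h =ᶠ[nhds y] fun t : ℝ => (iteratedDeriv k F t).re := by
      filter_upwards [hV.mem_nhds hy] with t ht
      exact ih t ht
    have hd : HasDerivAt (fun t : ℝ => (iteratedDeriv k F t).re)
        (iteratedDeriv (k + 1) F y).re y := by
      have h1 : HasDerivAt (iteratedDeriv k F) (deriv (iteratedDeriv k F) (y : ℂ)) (y : ℂ) :=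
        ((hFk k) (y : ℂ) hy).differentiableAt.hasDerivAt
      have h2 := h1.real_of_complex
      rwa [← iteratedDeriv_succ] at h2
    rw [iteratedDeriv_succ, hev.deriv_eq, hd.deriv]

private lemma exists_complex_extension {f : ℝ → ℝ} {x : ℝ} (hf : AnalyticAt ℝ f x) :
    ∃ (F : ℂ → ℂ) (s : ℝ), 0 < s ∧ DifferentiableOn ℂ F (ball (x : ℂ) s) ∧
      ∀ y : ℝ, |y - x| < s → F y = (f y : ℂ) := by
  obtain ⟨p, r, hpr⟩ := hf
  obtain ⟨s, hsr, hs0⟩ := ENNReal.lt_iff_exists_nnreal_btwn.mp hpr.r_pos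
  -- hsr : 0 < ↑s, hs0 : ↑s < r
  have hs : 0 < s := by exact_mod_cast hsr
  set q : FormalMultilinearSeries ℂ ℂ ℂ :=
    FormalMultilinearSeries.ofScalars ℂ (fun n => (p.coeff n : ℂ)) with hqdef
  have hq_norm : ∀ n, ‖q n‖ = ‖p n‖ := by
    intro n
    rw [hqdef, FormalMultilinearSeries.ofScalars_norm, Complex.norm_real,
      FormalMultilinearSeries.norm_apply_eq_norm_coef]
  have hq_radius : (s : ℝ≥0∞) ≤ q.radius := by
    obtain ⟨C, hC0, hC⟩ := p.norm_mul_pow_le_of_lt_radius (lt_of_lt_of_le hs0 hpr.r_le)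
    exact q.le_radius_of_bound C (fun n => by rw [hq_norm]; exact hC n)
  have hq0 : (0 : ℝ≥0∞) < s := hsr
  have hqsum : HasFPowerSeriesOnBall q.sum q 0 s :=
    (q.hasFPowerSeriesOnBall (lt_of_lt_of_le hq0 hq_radius)).mono hq0 hq_radius
  refine ⟨fun z => q.sum (z - x), s, hs, ?_, ?_⟩
  · intro z hz
    have hnn : ‖z - (x : ℂ)‖₊ < s := by
      rw [← NNReal.coe_lt_coe]
      simpa [dist_eq_norm] using hz
    have hmem : (z - (x : ℂ)) ∈ Metric.eball (0 : ℂ) s := by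
      rw [Metric.mem_eball, edist_eq_enorm_sub, sub_zero]
      exact_mod_cast hnn
    have ha : AnalyticAt ℂ q.sum (z - x) := hqsum.analyticAt_of_mem (by simpa using hmem)
    exact ((ha.differentiableAt.comp z
      ((differentiable_id.sub_const _) z)).differentiableWithinAt)
  · intro y hy
    have hnnr : ‖y - x‖₊ < s := by
      rw [← NNReal.coe_lt_coe]
      simpa [Real.norm_eq_abs] using hy
    have hmemr : (y - x : ℝ) ∈ Metric.eball (0 : ℝ) r := by
      rw [Metric.mem_eball, edist_eq_enorm_sub, sub_zero]
      exact lt_trans (by exact_mod_cast hnnr) hs0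
    have hmemc : ((y : ℂ) - (x : ℂ)) ∈ Metric.eball (0 : ℂ) s := by
      rw [Metric.mem_eball, edist_eq_enorm_sub, sub_zero, ← Complex.ofReal_sub, enorm_lt_coe]
      have : ‖((y - x : ℝ) : ℂ)‖₊ = ‖y - x‖₊ := by
        ext
        exact Complex.norm_real _
      rw [this]
      exact_mod_cast hnnr
    have h1 := hpr.hasSum (y := y - x) hmemr
    have h2 : HasSum (fun n => ((p.coeff n * (y - x) ^ n : ℝ) : ℂ)) ((f y : ℂ)) := by
      have h1' : HasSum (fun n => p.coeff n * (y - x) ^ n) (f y) := by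
        simpa [FormalMultilinearSeries.apply_eq_pow_smul_coeff, smul_eq_mul, mul_comm] using h1
      exact Complex.ofRealCLM.hasSum h1'
    have h3 := hqsum.hasSum (y := ((y : ℂ) - (x : ℂ))) hmemc
    have hterm : (fun n => q n fun _ => ((y : ℂ) - (x : ℂ)))
        = fun n => ((p.coeff n : ℂ)) * ((y : ℂ) - (x : ℂ)) ^ n := by
      funext n
      rw [hqdef, FormalMultilinearSeries.ofScalars_apply_eq, smul_eq_mul]
    have h3' : HasSum (fun n => ((p.coeff n : ℂ)) * ((y : ℂ) - (x : ℂ)) ^ n)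
        (q.sum ((y : ℂ) - (x : ℂ))) := by
      have := h3
      rw [zero_add] at this
      rwa [hterm] at this
    have : (fun n => ((p.coeff n * (y - x) ^ n : ℝ) : ℂ))
        = fun n => ((p.coeff n : ℂ)) * ((y : ℂ) - (x : ℂ)) ^ n := by
      funext n; push_cast; ring
    rw [this] at h2
    show q.sum ((y : ℂ) - (x : ℂ)) = (f y : ℂ)
    exact h3'.unique h2

/-- Probability mass function of the geometric subordinated Poisson process
(Proposition 3.2): mixing the pmf `((−1)^k/k!)·(d^k/du^k)[e^{−n f(λu)}]|_{u=1}` of the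
subordinated Poisson process at integer time `n` over the geometric counting distribution
yields `((−1)^k/k!)·(d^k/du^k)[1/(1+μt(1−e^{−f(λu)}))]|_{u=1}`; here stated before
multiplication by `(−1)^k/k!`. -/
theorem pmf_geometric_subordinated_poisson (lam μ t : ℝ)
    (hlam : 0 < lam) (hμ : 0 < μ) (ht : 0 < t) (k : ℕ)
    (f : ℝ → ℝ) (I : Set ℝ) (hI : IsOpen I) (hmem : lam ∈ I)
    (hf : ∀ x ∈ I, AnalyticAt ℝ f x) (hfnonneg : ∀ x ∈ I, 0 ≤ f x) :
    HasSum
      (fun n : ℕ => (1 / (1 + μ * t)) * (μ * t / (1 + μ * t)) ^ n *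
        iteratedDeriv k (fun u => Real.exp (-(n : ℝ) * f (lam * u))) 1)
      (iteratedDeriv k (fun u => 1 / (1 + μ * t * (1 - Real.exp (-f (lam * u))))) 1) := by
  classical
  have hμt : 0 < μ * t := mul_pos hμ ht
  have hden : 0 < 1 + μ * t := by linarith
  set c : ℝ := 1 / (1 + μ * t) with hc
  set q : ℝ := μ * t / (1 + μ * t) with hq
  have hc0 : 0 < c := by positivity
  have hq0 : 0 < q := by positivity
  have hq1 : q < 1 := by rw [hq, div_lt_one hden]; linarith
  set a : ℝ := (1 + q) / 2 with ha
  have hqa : q < a := by rw [ha]; linarith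
  have ha1 : a < 1 := by rw [ha]; linarith
  have ha0 : 0 < a := by positivity
  set ε₀ : ℝ := Real.log (a / q) with hε₀
  have hε₀pos : 0 < ε₀ := Real.log_pos (by rw [lt_div_iff₀ hq0]; linarith)
  have hqexp : q * Real.exp ε₀ = a := by
    rw [hε₀, Real.exp_log (by positivity)]
    field_simp
  obtain ⟨fC, s, hs, hfCdiff, hfCagree⟩ := exists_complex_extension (hf lam hmem)
  obtain ⟨ε, hε, hεI⟩ := Metric.isOpen_iff.mp hI lam hmem
  set ρ : ℝ := min s ε with hρ
  have hρ0 : 0 < ρ := lt_min hs hε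
  have hρs : ρ ≤ s := min_le_left _ _
  have hρε : ρ ≤ ε := min_le_right _ _
  have hfCd : DifferentiableOn ℂ fC (Metric.ball (lam : ℂ) ρ) :=
    hfCdiff.mono (Metric.ball_subset_ball hρs)
  have hagree : ∀ y : ℝ, |y - lam| < ρ → fC y = ((f y : ℝ) : ℂ) :=
    fun y hy => hfCagree y (lt_of_lt_of_le hy hρs)
  have hIball : ∀ y : ℝ, |y - lam| < ρ → y ∈ I := by
    intro y hy
    apply hεI
    rw [Metric.mem_ball, Real.dist_eq]
    exact lt_of_lt_of_le hy hρε
  set W : Set ℂ := Metric.ball (lam : ℂ) ρ ∩ fC ⁻¹' {w : ℂ | -ε₀ < w.re} with hW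
  have hWopen : IsOpen W :=
    hfCd.continuousOn.isOpen_inter_preimage Metric.isOpen_ball
      (isOpen_lt continuous_const Complex.continuous_re)
  have hWmem : ∀ z ∈ W, z ∈ Metric.ball (lam : ℂ) ρ := fun z hz => hz.1
  set U : Set ℂ := (fun z : ℂ => (lam : ℂ) * z) ⁻¹' W with hUdef
  have hUopen : IsOpen U := hWopen.preimage (by continuity)
  have h1U : (1 : ℂ) ∈ U := by
    show (lam : ℂ) * 1 ∈ W
    rw [mul_one]
    constructor
    · exact Metric.mem_ball_self hρ0
    · show -ε₀ < (fC lam).re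
      rw [hagree lam (by simpa using hρ0)]
      simp only [Complex.ofReal_re]
      have := hfnonneg lam hmem
      linarith
  have hUreal : ∀ y : ℝ, (y : ℂ) ∈ U →
      |lam * y - lam| < ρ ∧ -ε₀ < f (lam * y) ∧ lam * y ∈ I := by
    intro y hy
    have h1 : ((lam * y : ℝ) : ℂ) ∈ W := by
      have h0 : (lam : ℂ) * (y : ℂ) ∈ W := hy
      rwa [← Complex.ofReal_mul] at h0
    have h2 : |lam * y - lam| < ρ := by
      have h0 := h1.1
      rw [Metric.mem_ball, Complex.isometry_ofReal.dist_eq, Real.dist_eq] at h0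
      exact h0
    have h4 : fC ((lam * y : ℝ) : ℂ) = ((f (lam * y) : ℝ) : ℂ) := hagree _ h2
    have h3 : -ε₀ < f (lam * y) := by
      have h0 := h1.2
      simp only [Set.mem_preimage, Set.mem_setOf_eq, h4, Complex.ofReal_re] at h0
      exact h0
    exact ⟨h2, h3, hIball _ h2⟩
  set Φ : ℕ → ℂ → ℂ := fun n z => Complex.exp (-(n : ℂ) * fC ((lam : ℂ) * z)) with hΦ
  set FF : ℕ → ℂ → ℂ := fun n z => ((c * q ^ n : ℝ) : ℂ) * Φ n z with hFF
  have hmaps : Set.MapsTo (fun z : ℂ => (lam : ℂ) * z) U (Metric.ball (lam : ℂ) ρ) :=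
    fun z hz => hWmem _ hz
  have hfCcomp : DifferentiableOn ℂ (fun z => fC ((lam : ℂ) * z)) U :=
    hfCd.comp ((differentiable_const _).mul differentiable_id).differentiableOn hmaps
  have hΦdiff : ∀ n, DifferentiableOn ℂ (Φ n) U := fun n =>
    (hfCcomp.const_mul (-(n : ℂ))).cexp
  have hFFdiff : ∀ n, DifferentiableOn ℂ (FF n) U := fun n => (hΦdiff n).const_mul _
  set u : ℕ → ℝ := fun n => c * a ^ n with hu
  have husum : Summable u := (summable_geometric_of_lt_one ha0.le ha1).mul_left c
  have hΦnorm : ∀ n : ℕ, ∀ z ∈ U, ‖Φ n z‖ ≤ Real.exp (n * ε₀) := by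
    intro n z hz
    have hre : -ε₀ < (fC ((lam : ℂ) * z)).re := hz.2
    show ‖Complex.exp (-(n : ℂ) * fC ((lam : ℂ) * z))‖ ≤ _
    rw [Complex.norm_exp]
    apply Real.exp_le_exp.mpr
    have heq : (-(n : ℂ) * fC ((lam : ℂ) * z)).re = -(n : ℝ) * (fC ((lam : ℂ) * z)).re := by
      rw [show (-(n : ℂ)) = ((-(n : ℝ) : ℝ) : ℂ) by push_cast; ring, Complex.re_ofReal_mul]
    rw [heq]
    nlinarith [hre, Nat.cast_nonneg (α := ℝ) n]
  have hFFle : ∀ n : ℕ, ∀ w ∈ U, ‖FF n w‖ ≤ u n := by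
    intro n w hw
    have h1 : ‖FF n w‖ = (c * q ^ n) * ‖Φ n w‖ := by
      show ‖((c * q ^ n : ℝ) : ℂ) * Φ n w‖ = _
      rw [norm_mul, Complex.norm_real, Real.norm_eq_abs,
        _root_.abs_of_nonneg (show (0:ℝ) ≤ c * q ^ n by positivity)]
    rw [h1]
    show (c * q ^ n) * ‖Φ n w‖ ≤ c * a ^ n
    calc (c * q ^ n) * ‖Φ n w‖ ≤ (c * q ^ n) * Real.exp (n * ε₀) :=
          mul_le_mul_of_nonneg_left (hΦnorm n w hw) (by positivity)
      _ = c * (q * Real.exp ε₀) ^ n := by rw [Real.exp_nat_mul, mul_pow]; ring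
      _ = c * a ^ n := by rw [hqexp]
  have hmain := hasSum_iteratedDeriv_complex k U FF u hUopen husum hFFdiff hFFle 1 h1U
  set G : ℂ → ℂ := fun w => ∑' n, FF n w with hG
  have hGdiff : DifferentiableOn ℂ G U :=
    Complex.differentiableOn_tsum_of_summable_norm husum hFFdiff hUopen
      (fun i w hw => hFFle i w hw)
  have hΦagree : ∀ n : ℕ, ∀ y : ℝ, (y : ℂ) ∈ U →
      Φ n y = ((Real.exp (-(n : ℝ) * f (lam * y)) : ℝ) : ℂ) := by
    intro n y hy
    obtain ⟨h2, -, -⟩ := hUreal y hy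
    have h4 : fC ((lam : ℂ) * y) = ((f (lam * y) : ℝ) : ℂ) := by
      rw [← Complex.ofReal_mul]; exact hagree _ h2
    show Complex.exp (-(n : ℂ) * fC ((lam : ℂ) * y)) = _
    rw [h4, Complex.ofReal_exp]
    congr 1
    push_cast
    ring
  have hRsum : ∀ y : ℝ, (y : ℂ) ∈ U →
      HasSum (fun n : ℕ => c * q ^ n * Real.exp (-(n : ℝ) * f (lam * y)))
        (1 / (1 + μ * t * (1 - Real.exp (-f (lam * y))))) := by
    intro y hy
    obtain ⟨-, -, hmemI⟩ := hUreal y hy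
    have hx0 : 0 < Real.exp (-f (lam * y)) := Real.exp_pos _
    have hx1 : Real.exp (-f (lam * y)) ≤ 1 :=
      Real.exp_le_one_iff.mpr (by linarith [hfnonneg _ hmemI])
    have hqx1 : q * Real.exp (-f (lam * y)) < 1 := by nlinarith
    have hgeo := (hasSum_geometric_of_lt_one (by positivity) hqx1).mul_left c
    have hterm : (fun n : ℕ => c * (q * Real.exp (-f (lam * y))) ^ n)
        = fun n : ℕ => c * q ^ n * Real.exp (-(n : ℝ) * f (lam * y)) := by
      funext n
      have hxe : Real.exp (-f (lam * y)) ^ n = Real.exp (-(n : ℝ) * f (lam * y)) := by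
        rw [← Real.exp_nat_mul]; congr 1; ring
      rw [mul_pow, hxe]; ring
    have hval : c * (1 - q * Real.exp (-f (lam * y)))⁻¹
        = 1 / (1 + μ * t * (1 - Real.exp (-f (lam * y)))) := by
      have key : (1 + μ * t) * (1 - q * Real.exp (-f (lam * y)))
          = 1 + μ * t * (1 - Real.exp (-f (lam * y))) := by
        rw [hq]
        field_simp
        ring
      rw [hc, one_div, ← mul_inv, key, one_div]
    rw [hterm, hval] at hgeo
    exact hgeo
  have hGagree : ∀ y : ℝ, (y : ℂ) ∈ U →
      G y = ((1 / (1 + μ * t * (1 - Real.exp (-f (lam * y)))) : ℝ) : ℂ) := by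
    intro y hy
    have h1 : ∀ n : ℕ, FF n (y : ℂ)
        = ((c * q ^ n * Real.exp (-(n : ℝ) * f (lam * y)) : ℝ) : ℂ) := by
      intro n
      show ((c * q ^ n : ℝ) : ℂ) * Φ n y = _
      rw [hΦagree n y hy, ← Complex.ofReal_mul]
    have h2 := Complex.ofRealCLM.hasSum (hRsum y hy)
    show (∑' n, FF n (y : ℂ)) = _
    rw [tsum_congr h1]
    exact h2.tsum_eq
  have hbridgeΦ : ∀ n : ℕ,
      iteratedDeriv k (fun u => Real.exp (-(n : ℝ) * f (lam * u))) 1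
        = (iteratedDeriv k (Φ n) 1).re := by
    intro n
    have h0 := iteratedDeriv_real_of_complex hUopen (hΦdiff n) (hΦagree n) k 1
      (by rwa [Complex.ofReal_one])
    simpa using h0
  have hbridgeG :
      iteratedDeriv k (fun u => 1 / (1 + μ * t * (1 - Real.exp (-f (lam * u))))) 1
        = (iteratedDeriv k G 1).re := by
    have h0 := iteratedDeriv_real_of_complex hUopen hGdiff hGagree k 1
      (by rwa [Complex.ofReal_one])
    simpa using h0
  have hre := Complex.reCLM.hasSum hmain
  have hfinal : (fun n : ℕ => (iteratedDeriv k (FF n) 1).re)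
      = fun n : ℕ => c * q ^ n *
        iteratedDeriv k (fun u => Real.exp (-(n : ℝ) * f (lam * u))) 1 := by
    funext n
    have h1 : iteratedDeriv k (FF n) 1 = ((c * q ^ n : ℝ) : ℂ) * iteratedDeriv k (Φ n) 1 :=
      iterDeriv_const_mul _ _ k 1
    rw [h1, Complex.re_ofReal_mul, hbridgeΦ n]
  have hre' : HasSum (fun n : ℕ => (iteratedDeriv k (FF n) 1).re)
      ((iteratedDeriv k G 1).re) := hre
  rw [hbridgeG]
  rw [hfinal] at hre'
  exact hre'
end
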